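/- For every K ≥ 2 and every n ∈ ℕ, every equilateral metric space of size at most (K/2)^n admits an embedding with distortion at most K into an arbitrary n-dimensional real Banach space. -/

import Mathlib

/-!
A volume comparison shows that the closed ball of radius `K / 2` in an `n`-dimensional normed
space contains `(K / 2) ^ n` points at mutual distance greater than `1`: as long as fewer points
have been chosen, the unit balls around them have total volume less than that of the big ball,
so a further point can be added. Any two of these points are at distance
between `1` and `K`, so sending the equilateral space bijectively onto some of them, after scaling
by `1 / e`, has distortion at most `K`.
-/

noncomputable section

namespace Stmt

/-- `embedsM K dV dY` : there is a map of distortion at most `K` from the space with distance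
function `dV` to the space with distance function `dY`. -/
def embedsM {V Y : Type*} (K : ℝ) (dV : V → V → ℝ) (dY : Y → Y → ℝ) : Prop :=
  ∃ f : V → Y, Function.Injective f ∧ ∃ r : ℝ, 0 < r ∧
    ∀ a b, r * dV a b ≤ dY (f a) (f b) ∧ dY (f a) (f b) ≤ K * (r * dV a b)

universe u v

open Metric MeasureTheory Module

section Packing

variable {X : Type*} [NormedAddCommGroup X] [NormedSpace ℝ X] [FiniteDimensional ℝ X]

lemma exists_mem_closedBall_forall_one_lt_dist {R : ℝ} (hR : 0 ≤ R) (S : Finset X)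
    (hS : (S.card : ℝ) < R ^ finrank ℝ X) :
    ∃ x ∈ closedBall (0 : X) R, ∀ s ∈ S, 1 < dist x s := by
  borelize X
  set μ := (finBasis ℝ X).addHaar
  have hμ_pos : μ (closedBall (0 : X) 1) ≠ 0 := (measure_closedBall_pos μ _ one_pos).ne'
  have hμ_fin : μ (closedBall (0 : X) 1) ≠ ⊤ := measure_closedBall_lt_top.ne
  have hvol : μ (⋃ s ∈ S, closedBall s 1) < μ (closedBall (0 : X) R) :=
    calc μ (⋃ s ∈ S, closedBall s 1)
        ≤ ∑ s ∈ S, μ (closedBall s 1) := measure_biUnion_finset_le S _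
      _ = ENNReal.ofReal S.card * μ (closedBall (0 : X) 1) := by
          rw [Finset.sum_congr rfl fun s _ => μ.addHaar_closedBall' s zero_le_one]
          simp only [one_pow, ENNReal.ofReal_one, one_mul, Finset.sum_const, nsmul_eq_mul,
            ENNReal.ofReal_natCast]
      _ < ENNReal.ofReal (R ^ finrank ℝ X) * μ (closedBall (0 : X) 1) :=
          ENNReal.mul_lt_mul_left hμ_pos hμ_fin
            ((ENNReal.ofReal_lt_ofReal_iff_of_nonneg (by positivity)).mpr hS)
      _ = μ (closedBall (0 : X) R) := (μ.addHaar_closedBall' 0 hR).symm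
  obtain ⟨x, hxR, hx⟩ := Set.not_subset.mp fun h => (measure_mono h).not_gt hvol
  refine ⟨x, hxR, fun s hs => not_le.mp fun hxs => hx ?_⟩
  exact Set.mem_biUnion hs (mem_closedBall.mpr hxs)

lemma exists_finset_card_eq_subset_closedBall_pairwise_one_lt_dist {R : ℝ} (hR : 0 ≤ R) (k : ℕ)
    (hk : (k : ℝ) ≤ R ^ finrank ℝ X) :
    ∃ S : Finset X, S.card = k ∧ ↑S ⊆ closedBall (0 : X) R ∧
      (S : Set X).Pairwise fun x y => 1 < dist x y := by
  classical
  induction k with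
  | zero => exact ⟨∅, by simp⟩
  | succ k ih =>
    obtain ⟨S, hS_card, hS_ball, hS_sep⟩ := ih (le_trans (by simp) hk)
    obtain ⟨x, hxR, hx⟩ := exists_mem_closedBall_forall_one_lt_dist hR S
      (by rw [hS_card]; exact lt_of_lt_of_le (by simp) hk)
    have hxS : x ∉ S := fun h => absurd (hx x h) (by simp)
    refine ⟨insert x S, by rw [Finset.card_insert_of_notMem hxS, hS_card], ?_, ?_⟩
    · rw [Finset.coe_insert]
      exact Set.insert_subset hxR hS_ball
    · rw [Finset.coe_insert]
      exact hS_sep.insert fun s hs _ => ⟨hx s hs, dist_comm x s ▸ hx s hs⟩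

end Packing

lemma embedsM_of_equilateral {M X : Type*} [PseudoMetricSpace M] [SeminormedAddCommGroup X]
    {K e : ℝ} (he : 0 < e) (hequi : ∀ x y : M, x ≠ y → dist x y = e) (f : M → X)
    (hf : ∀ a b, a ≠ b → 1 ≤ ‖f a - f b‖ ∧ ‖f a - f b‖ ≤ K) :
    embedsM K (fun a b : M => dist a b) (fun a b : X => ‖a - b‖) := by
  refine ⟨f, fun a b hab => ?_, 1 / e, by positivity, fun a b => ?_⟩
  · by_contra hne
    have := (hf a b hne).1
    rw [hab, sub_self, norm_zero] at this
    linarith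
  · rcases eq_or_ne a b with rfl | hab
    · simp
    · dsimp only
      rw [hequi a b hab, one_div_mul_cancel he.ne', mul_one]
      exact hf a b hab

/-- For every `K ≥ 2` and every `n`, every equilateral metric space of
size at most `(K/2)^n` admits an embedding with distortion at most `K` into an arbitrary
`n`-dimensional real Banach space. -/
theorem statement19 (K : ℝ) (hK : 2 ≤ K) (n : ℕ)
    (M : Type v) [MetricSpace M] [Fintype M]
    (e : ℝ) (he : 0 < e) (hequi : ∀ x y : M, x ≠ y → dist x y = e)
    (hcard : (Fintype.card M : ℝ) ≤ (K / 2) ^ n)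
    (X : Type u) [NormedAddCommGroup X] [NormedSpace ℝ X] [FiniteDimensional ℝ X]
    (hdim : Module.finrank ℝ X = n) :
    embedsM K (fun a b : M => dist a b) (fun a b : X => ‖a - b‖) := by
  obtain ⟨S, hS_card, hS_ball, hS_sep⟩ :=
    exists_finset_card_eq_subset_closedBall_pairwise_one_lt_dist (X := X)
      (by linarith : (0 : ℝ) ≤ K / 2) (Fintype.card M) (hdim ▸ hcard)
  let g : M ≃ S := Fintype.equivOfCardEq (by rw [Fintype.card_coe, hS_card])
  refine embedsM_of_equilateral he hequi (fun m => (g m : X)) fun a b hab => ⟨?_, ?_⟩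
  · rw [← dist_eq_norm]
    exact (hS_sep (g a).2 (g b).2 fun h => hab (g.injective (Subtype.ext h))).le
  · calc ‖(g a : X) - g b‖ ≤ ‖(g a : X)‖ + ‖(g b : X)‖ := norm_sub_le _ _
      _ ≤ K / 2 + K / 2 := add_le_add (mem_closedBall_zero_iff.mp (hS_ball (g a).2))
          (mem_closedBall_zero_iff.mp (hS_ball (g b).2))
      _ = K := add_halves K

end Stmt
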